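/- Let N ≥ 1 and let M be an N×N Hermitian positive semidefinite complex matrix, with Ω(s) = (1/N)·Tr[(M + s·I)⁻¹] for s > 0 and φ(v) = 1/Ω(1/v) − 1/v for v > 0. Then φ is differentiable on (0, ∞), and for all 0 < v₀ < v₁ one has ∫_{v₀}^{v₁} Ω(1/v)·φ′(v) dv = log Ω(1/v₀) − log Ω(1/v₁) + (1/N)·( log det(M + (1/v₀)·I) − log det(M + (1/v₁)·I) ). -/

import Mathlib

/-!
Diagonalising `M`, with eigenvalues `λᵢ ≥ 0`, gives `Ω(1/v) = (1/N) ∑ᵢ (λᵢ + 1/v)⁻¹` and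
`log det (M + v⁻¹ I) = ∑ᵢ log (λᵢ + 1/v)`, whose derivative in `v` is `-N Ω(1/v) / v²`.
Writing `w v = Ω(1/v)`, so that `φ = 1/w - 1/v`, the integrand is
`w φ' = -w'/w + w/v² = (-log w - (1/N) log det (M + v⁻¹ I))'`,
and the identity is the fundamental theorem of calculus.
-/

open Matrix
open scoped ComplexOrder

open Real Set Filter Topology

namespace Matrix.IsHermitian

variable {n 𝕜 : Type*} [RCLike 𝕜] [Fintype n] [DecidableEq n] {A : Matrix n n 𝕜}

lemma re_trace_cfc (hA : A.IsHermitian) (f : ℝ → ℝ) :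
    RCLike.re (cfc f A).trace = ∑ i, f (hA.eigenvalues i) := by
  rw [hA.cfc_eq, IsHermitian.cfc, Unitary.conjStarAlgAut_apply, trace_mul_cycle,
    Unitary.coe_star_mul_self, one_mul, trace_diagonal, map_sum]
  simp only [Function.comp_apply, RCLike.ofReal_re]

lemma re_det_cfc (hA : A.IsHermitian) (f : ℝ → ℝ) :
    RCLike.re (cfc f A).det = ∏ i, f (hA.eigenvalues i) := by
  rw [hA.cfc_eq, IsHermitian.cfc, det_map, det_diagonal]
  simp only [Function.comp_apply, ← RCLike.ofReal_prod, RCLike.ofReal_re]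

lemma add_smul_one_eq_cfc (hA : A.IsHermitian) (s : ℝ) :
    A + s • (1 : Matrix n n 𝕜) = cfc (· + s) A := by
  rw [cfc_add_const s (fun x => x) A, cfc_id' ℝ A, Algebra.algebraMap_eq_smul_one]

lemma inv_add_smul_one_eq_cfc (hA : A.IsHermitian) {s : ℝ} (hs : ∀ i, hA.eigenvalues i + s ≠ 0) :
    (A + s • (1 : Matrix n n 𝕜))⁻¹ = cfc (fun x => (x + s)⁻¹) A := by
  rw [cfc_inv (· + s) A, nonsing_inv_eq_ringInverse, hA.add_smul_one_eq_cfc]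
  rw [hA.spectrum_real_eq_range_eigenvalues]
  rintro - ⟨i, rfl⟩
  exact hs i

lemma re_trace_inv_add_smul_one (hA : A.IsHermitian) {s : ℝ}
    (hs : ∀ i, hA.eigenvalues i + s ≠ 0) :
    RCLike.re (A + s • (1 : Matrix n n 𝕜))⁻¹.trace = ∑ i, (hA.eigenvalues i + s)⁻¹ := by
  rw [hA.inv_add_smul_one_eq_cfc hs, hA.re_trace_cfc]

lemma re_det_add_smul_one (hA : A.IsHermitian) (s : ℝ) :
    RCLike.re (A + s • (1 : Matrix n n 𝕜)).det = ∏ i, (hA.eigenvalues i + s) := by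
  rw [hA.add_smul_one_eq_cfc, hA.re_det_cfc]

end Matrix.IsHermitian

section OneDivSubOneDiv

variable {w φ L : ℝ → ℝ} {c v a b : ℝ}

lemma hasDerivAt_of_eventuallyEq_one_div_sub_one_div (hv : v ≠ 0) (hw : DifferentiableAt ℝ w v)
    (hwv : w v ≠ 0) (hφ : φ =ᶠ[𝓝 v] fun x => 1 / w x - 1 / x) :
    HasDerivAt φ (-deriv w v / w v ^ 2 + 1 / v ^ 2) v := by
  refine (((hw.hasDerivAt.fun_inv hwv).sub (hasDerivAt_inv hv)).congr_deriv (by ring))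
    |>.congr_of_eventuallyEq ?_
  exact hφ.trans (.of_forall fun x => by simp)

lemma hasDerivAt_neg_log_sub_mul (hc : c ≠ 0) (hv : v ≠ 0) (hw : DifferentiableAt ℝ w v)
    (hwv : 0 < w v) (hL : HasDerivAt L (-(c * w v / v ^ 2)) v)
    (hφ : φ =ᶠ[𝓝 v] fun x => 1 / w x - 1 / x) :
    HasDerivAt (fun x => -log (w x) - 1 / c * L x) (w v * deriv φ v) v := by
  rw [(hasDerivAt_of_eventuallyEq_one_div_sub_one_div hv hw hwv.ne' hφ).deriv]
  refine ((hw.hasDerivAt.log hwv.ne').neg.sub (hL.const_mul (1 / c))).congr_deriv ?_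
  field_simp
  ring

theorem integral_mul_deriv_one_div_sub_one_div (hc : c ≠ 0) (ha : 0 < a) (hab : a ≤ b)
    (hw : ContDiffOn ℝ 1 w (Ioi 0)) (hw_pos : ∀ v, 0 < v → 0 < w v)
    (hL : ∀ v, 0 < v → HasDerivAt L (-(c * w v / v ^ 2)) v)
    (hφ : ∀ v, 0 < v → φ v = 1 / w v - 1 / v) :
    ∫ v in a..b, w v * deriv φ v = log (w a) - log (w b) + 1 / c * (L a - L b) := by
  have hpos : ∀ v ∈ uIcc a b, 0 < v := fun v hv =>
    ha.trans_le (by rw [uIcc_of_le hab] at hv; exact hv.1)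
  have hφ_nhds : ∀ v, 0 < v → φ =ᶠ[𝓝 v] fun x => 1 / w x - 1 / x := fun v hv =>
    eventually_of_mem (Ioi_mem_nhds hv) hφ
  have hw_diff : ∀ v, 0 < v → DifferentiableAt ℝ w v := fun v hv =>
    (hw.differentiableOn one_ne_zero v hv).differentiableAt (Ioi_mem_nhds hv)
  have hderiv : ∀ v ∈ uIcc a b, HasDerivAt (fun x => -log (w x) - 1 / c * L x)
      (w v * deriv φ v) v := fun v hv =>
    hasDerivAt_neg_log_sub_mul hc (hpos v hv).ne' (hw_diff v (hpos v hv)) (hw_pos v (hpos v hv))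
      (hL v (hpos v hv)) (hφ_nhds v (hpos v hv))
  have hcont : ContinuousOn (fun v => w v * (-deriv w v / w v ^ 2 + 1 / v ^ 2)) (uIcc a b) := by
    have hwc := hw.continuousOn.mono fun v hv => hpos v hv
    have hdwc := (hw.continuousOn_deriv_of_isOpen isOpen_Ioi le_rfl).mono fun v hv => hpos v hv
    exact hwc.mul
      ((hdwc.neg.div (hwc.pow 2) fun v hv => pow_ne_zero 2 (hw_pos v (hpos v hv)).ne').add
      (continuousOn_const.div (continuousOn_id.pow 2) fun v hv => pow_ne_zero 2 (hpos v hv).ne'))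
  rw [intervalIntegral.integral_eq_sub_of_hasDerivAt hderiv]
  · ring
  · refine (hcont.congr fun v hv => ?_).intervalIntegrable
    rw [(hasDerivAt_of_eventuallyEq_one_div_sub_one_div (hpos v hv).ne' (hw_diff v (hpos v hv))
      (hw_pos v (hpos v hv)).ne' (hφ_nhds v (hpos v hv))).deriv]

end OneDivSubOneDiv

section ResolventSums

variable {ι : Type*} [Fintype ι] {l : ι → ℝ}

lemma contDiffOn_sum_inv_add_inv {n : WithTop ℕ∞} (hl : ∀ i, 0 ≤ l i) :
    ContDiffOn ℝ n (fun v => ∑ i, (l i + v⁻¹)⁻¹) (Ioi 0) := by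
  refine ContDiffOn.sum fun i _ =>
    (contDiffOn_const.add ((contDiffOn_inv ℝ).mono fun v hv => ne_of_gt hv)).inv fun v hv => ?_
  have : 0 < v := hv
  have := hl i
  positivity

lemma hasDerivAt_sum_log_add_inv {v : ℝ} (hv : v ≠ 0) (hl : ∀ i, l i + v⁻¹ ≠ 0) :
    HasDerivAt (fun x => ∑ i, log (l i + x⁻¹)) (-(∑ i, (l i + v⁻¹)⁻¹) / v ^ 2) v := by
  refine (HasDerivAt.fun_sum fun i _ =>
    ((hasDerivAt_inv hv).const_add (l i)).log (hl i)).congr_deriv ?_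
  rw [neg_div, Finset.sum_div, ← Finset.sum_neg_distrib]
  refine Finset.sum_congr rfl fun i _ => ?_
  field_simp

end ResolventSums

/-- with `Ω(s) = (1/N)·Tr[(M + s·I)⁻¹]` and `φ(v) = 1/Ω(1/v) − 1/v`, `φ` is
differentiable on `(0, ∞)` and for `0 < v₀ < v₁`,
`∫_{v₀}^{v₁} Ω(1/v)·φ′(v) dv = log Ω(1/v₀) − log Ω(1/v₁)
  + (1/N)(log det(M + v₀⁻¹ I) − log det(M + v₁⁻¹ I))`
(steps (c)–(f) of Appendix A's proof of Theorem 3). -/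
theorem stmt_3 {N : ℕ} (hN : 1 ≤ N) (M : Matrix (Fin N) (Fin N) ℂ)
    (hM : M.PosSemidef)
    (Ω φ : ℝ → ℝ)
    (hΩ : ∀ s : ℝ, 0 < s →
      Ω s = (1 / (N : ℝ)) * (((M + (s : ℂ) • (1 : Matrix (Fin N) (Fin N) ℂ))⁻¹).trace).re)
    (hφ : ∀ v : ℝ, 0 < v → φ v = 1 / Ω (1 / v) - 1 / v)
    (v₀ v₁ : ℝ) (hv₀ : 0 < v₀) (hv₀₁ : v₀ < v₁) :
    (∀ v : ℝ, 0 < v → DifferentiableAt ℝ φ v) ∧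
    ∫ v in v₀..v₁, Ω (1 / v) * deriv φ v
      = Real.log (Ω (1 / v₀)) - Real.log (Ω (1 / v₁))
        + (1 / (N : ℝ)) *
          (Real.log (((M + ((1 / v₀ : ℝ) : ℂ) • (1 : Matrix (Fin N) (Fin N) ℂ)).det).re)
            - Real.log (((M + ((1 / v₁ : ℝ) : ℂ) • (1 : Matrix (Fin N) (Fin N) ℂ)).det).re)) := by
  have : Nonempty (Fin N) := ⟨⟨0, hN⟩⟩
  have hN0 : (N : ℝ) ≠ 0 := Nat.cast_ne_zero.2 (by omega)
  set l := hM.isHermitian.eigenvalues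
  have hl_pos : ∀ v, 0 < v → ∀ i, 0 < l i + v⁻¹ := fun v hv i => by
    have := hM.eigenvalues_nonneg i; positivity
  have hw : ∀ v, 0 < v → Ω (1 / v) = 1 / N * ∑ i, (l i + v⁻¹)⁻¹ := fun v hv => by
    rw [hΩ _ (by positivity), one_div v, Complex.coe_smul]
    exact congrArg _ (hM.isHermitian.re_trace_inv_add_smul_one fun i => (hl_pos v hv i).ne')
  have hL : ∀ v, 0 < v →
      Real.log (((M + ((1 / v : ℝ) : ℂ) • (1 : Matrix (Fin N) (Fin N) ℂ)).det).re)
        = ∑ i, Real.log (l i + v⁻¹) := fun v hv => by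
    rw [one_div v, Complex.coe_smul, ← Real.log_prod fun i _ => (hl_pos v hv i).ne']
    exact congrArg log (hM.isHermitian.re_det_add_smul_one _)
  have hw_smooth : ContDiffOn ℝ 1 (fun v => Ω (1 / v)) (Ioi 0) :=
    (contDiffOn_const.mul (contDiffOn_sum_inv_add_inv hM.eigenvalues_nonneg)).congr hw
  have hw_pos : ∀ v, 0 < v → 0 < Ω (1 / v) := fun v hv => by
    have := Finset.sum_pos (fun i _ => inv_pos.2 (hl_pos v hv i)) Finset.univ_nonempty
    rw [hw v hv]
    positivity
  have hL_deriv : ∀ v, 0 < v → HasDerivAt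
      (fun v => Real.log (((M + ((1 / v : ℝ) : ℂ) • (1 : Matrix (Fin N) (Fin N) ℂ)).det).re))
      (-(N * Ω (1 / v) / v ^ 2)) v := fun v hv =>
    ((hasDerivAt_sum_log_add_inv hv.ne' fun i => (hl_pos v hv i).ne').congr_of_eventuallyEq
      (eventually_of_mem (Ioi_mem_nhds hv) hL)).congr_deriv
      (by rw [hw v hv, ← mul_assoc, mul_one_div_cancel hN0, one_mul, neg_div])
  refine ⟨fun v hv => ?_,
    integral_mul_deriv_one_div_sub_one_div hN0 hv₀ hv₀₁.le hw_smooth hw_pos hL_deriv hφ⟩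
  exact (hasDerivAt_of_eventuallyEq_one_div_sub_one_div hv.ne'
    ((hw_smooth.contDiffAt (Ioi_mem_nhds hv)).differentiableAt one_ne_zero) (hw_pos v hv).ne'
    (eventually_of_mem (Ioi_mem_nhds hv) hφ)).differentiableAt
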